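/- Let G be a finite median graph that is a daisy cube (i.e., G is an isometric subgraph of Q_n whose vertex set is downward closed). Then G is isomorphic to the simplex graph S(H) for some graph H. -/

import Mathlib

open SimpleGraph

/-- The hypercube graph `Q_n` on vertex set `{0,1}^n`. -/
def cubeGraph (n : ℕ) : SimpleGraph (Fin n → Bool) where
  Adj a b := (Finset.univ.filter fun i => a i ≠ b i).card = 1
  symm := by
    constructor
    intro a b h
    have hset : (Finset.univ.filter fun i => b i ≠ a i) =
        (Finset.univ.filter fun i => a i ≠ b i) := by
      apply Finset.filter_congr; intro i _; exact ne_comm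
    rw [hset]; exact h
  loopless := by constructor; intro a h; simp at h

/-- The simplex graph `S(G)`: vertices are the cliques of `G` (including `∅`),
two cliques adjacent iff they differ in exactly one vertex. -/
noncomputable def simplexGraph {V : Type*} (G : SimpleGraph V) :
    SimpleGraph {s : Finset V // G.IsClique (↑s : Set V)} := by
  classical
  exact
    { Adj := fun a b => (symmDiff a.1 b.1).card = 1
      symm := by constructor; intro a b h; rwa [symmDiff_comm]
      loopless := by constructor; intro a h; simp [symmDiff_self] at h }

/-- A median graph: connected and every triple of vertices has a unique median. -/
def IsMedianGraph {V : Type*} (G : SimpleGraph V) : Prop :=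
  G.Connected ∧ ∀ u v w : V, ∃! x : V,
    G.dist u x + G.dist x v = G.dist u v ∧
    G.dist u x + G.dist x w = G.dist u w ∧
    G.dist v x + G.dist x w = G.dist v w

/-- `f` is an isometric embedding of `G` into the hypercube `Q_n`
(injective, induced, and distance preserving). -/
def IsIsometricEmbedding {V : Type*} (G : SimpleGraph V) (n : ℕ) (f : V → Fin n → Bool) : Prop :=
  Function.Injective f ∧
    (∀ u v, G.Adj u v ↔ (cubeGraph n).Adj (f u) (f v)) ∧
    (∀ u v, G.dist u v = (cubeGraph n).dist (f u) (f v))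

/-- A partial cube: a graph isomorphic to an isometric subgraph of a hypercube. -/
def IsPartialCube {V : Type*} (G : SimpleGraph V) : Prop :=
  ∃ n f, IsIsometricEmbedding G n f

/-- A daisy cube: an isometric subgraph of a hypercube whose vertex set is
downward closed for the coordinatewise order. -/
def IsDaisyCube {V : Type*} (G : SimpleGraph V) : Prop :=
  ∃ n f, IsIsometricEmbedding G n f ∧
    ∀ (u : V) (b : Fin n → Bool), (∀ i, b i ≤ f u i) → ∃ w, f w = b

/-- The isometric dimension of `G`. -/
noncomputable def idim {V : Type*} (G : SimpleGraph V) : ℕ :=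
  sInf {n | ∃ f, IsIsometricEmbedding G n f}

/-- The Djoković–Winkler relation `Θ` on (unordered) edges. -/
def ThetaE {V : Type*} (G : SimpleGraph V) (e f : Sym2 V) : Prop :=
  ∃ u v x y, e = s(u, v) ∧ f = s(x, y) ∧
    G.dist u x + G.dist v y ≠ G.dist u y + G.dist v x

/-- The halfspace `W_{uv}`. -/
def Wset {V : Type*} (G : SimpleGraph V) (u v : V) : Set V :=
  {w | G.dist u w < G.dist v w}

/-- The set `U_{uv}` of vertices of `W_{uv}` incident with an edge of `F_{uv}`. -/
def Uset {V : Type*} (G : SimpleGraph V) (u v : V) : Set V :=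
  {w | w ∈ Wset G u v ∧ ∃ b ∈ Wset G v u, G.Adj w b}

/-- The Θ-classes of the edges `uv` and `xy` cross: all four intersections of
halfspaces are nonempty. -/
def Cross {V : Type*} (G : SimpleGraph V) (u v x y : V) : Prop :=
  (Wset G u v ∩ Wset G x y).Nonempty ∧ (Wset G u v ∩ Wset G y x).Nonempty ∧
  (Wset G v u ∩ Wset G x y).Nonempty ∧ (Wset G v u ∩ Wset G y x).Nonempty

/-- A set of vertices is convex if it contains every geodesic between its points. -/
def ConvexSet {V : Type*} (G : SimpleGraph V) (S : Set V) : Prop :=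
  ∀ u ∈ S, ∀ v ∈ S, ∀ p : G.Walk u v, p.length = G.dist u v → ∀ w ∈ p.support, w ∈ S

/-- The cycle graph on `ZMod m` (for `m ≥ 3`). -/
def cycG (m : ℕ) : SimpleGraph (ZMod m) where
  Adj i j := i ≠ j ∧ (j = i + 1 ∨ i = j + 1)
  symm := by constructor; rintro i j ⟨h, h'⟩; exact ⟨h.symm, h'.symm⟩
  loopless := by constructor; rintro i ⟨h, _⟩; exact h rfl

/-!
Record each vertex `u` of the daisy cube by the set `g u` of coordinates where it is `1`. Then `G`
is isometric to the family `𝓕 = range g` with the metric `#(A ∆ B)`, and `𝓕` is closed under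
subsets. The median of `u, v, w` lies metrically between each pair of them, which forces its set
to be the majority `A ∩ B ∪ A ∩ C ∪ B ∩ C`; so `𝓕` is closed under majorities. For `a ≠ b` in `S`,
`S` is the majority of `S \ {a}`, `S \ {b}` and `{a, b}`, hence by induction `S ∈ 𝓕` as soon as
its subsets of size at most two are. So `𝓕` consists exactly of the cliques of the graph `H` on
`{a | {a} ∈ 𝓕}` with `a ~ b` iff `{a, b} ∈ 𝓕`, and `G ≅ S(H)`.
-/

open Finset
open scoped symmDiff

section Hypercube

variable {ι : Type*} [Fintype ι]

def trueSet (a : ι → Bool) : Finset ι := {i | a i = true}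

@[simp]
lemma mem_trueSet {a : ι → Bool} {i : ι} : i ∈ trueSet a ↔ a i = true := by
  simp [trueSet]

lemma trueSet_decide_mem [DecidableEq ι] (B : Finset ι) :
    trueSet (fun i => decide (i ∈ B)) = B := by
  ext; simp

lemma card_symmDiff_trueSet [DecidableEq ι] (a b : ι → Bool) :
    #(trueSet a ∆ trueSet b) = hammingDist a b := by
  unfold hammingDist
  congr 1
  ext i
  cases hai : a i <;> cases hbi : b i <;> simp [mem_symmDiff, hai, hbi]

lemma isLowerSet_range_trueSet {V : Type*} {f : V → ι → Bool}
    (hf : ∀ u b, (∀ i, b i ≤ f u i) → ∃ w, f w = b) :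
    IsLowerSet (Set.range fun u => trueSet (f u)) := by
  classical
  rintro _ B hBA ⟨u, rfl⟩
  obtain ⟨w, hw⟩ := hf u (fun i => decide (i ∈ B)) fun i => by
    by_cases hi : i ∈ B
    · simp [hi, show f u i = true from mem_trueSet.1 (hBA hi)]
    · simp [hi]
  exact ⟨w, by simp only [hw, trueSet_decide_mem]⟩

end Hypercube

section CubeGraph

variable {n : ℕ}

lemma cubeGraph_adj_iff {a b : Fin n → Bool} : (cubeGraph n).Adj a b ↔ hammingDist a b = 1 :=
  Iff.rfl

lemma hammingDist_le_length {a b : Fin n → Bool} (p : (cubeGraph n).Walk a b) :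
    hammingDist a b ≤ p.length := by
  induction p with
  | nil => simp
  | @cons u v w h p ih =>
    rw [Walk.length_cons]
    have := hammingDist_triangle u v w
    rw [cubeGraph_adj_iff] at h
    omega

lemma exists_walk_length_eq_hammingDist (a b : Fin n → Bool) :
    ∃ p : (cubeGraph n).Walk a b, p.length = hammingDist a b := by
  induction hk : hammingDist a b generalizing a with
  | zero => rw [hammingDist_eq_zero.1 hk]; exact ⟨.nil, rfl⟩
  | succ k ih =>
    obtain ⟨i, hi⟩ : ∃ i, a i ≠ b i := by
      by_contra! h
      simp [funext h] at hk
    set a' := Function.update a i (b i)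
    have hadj : (cubeGraph n).Adj a a' := by
      have : ({j | a j ≠ a' j} : Finset (Fin n)) = {i} := by
        ext j; rcases eq_or_ne j i with rfl | hj <;> simp [a', *]
      rw [cubeGraph_adj_iff, hammingDist, this, card_singleton]
    have hrest : hammingDist a' b = k := by
      have : ({j | a' j ≠ b j} : Finset (Fin n)) = ({j | a j ≠ b j} : Finset (Fin n)).erase i := by
        ext j; rcases eq_or_ne j i with rfl | hj <;> simp [a', *]
      rw [hammingDist, this, card_erase_of_mem (by simpa using hi), ← hammingDist, hk,
        Nat.add_sub_cancel]
    obtain ⟨p, hp⟩ := ih a' hrest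
    exact ⟨.cons hadj p, by simp [hp]⟩

lemma cubeGraph_dist (a b : Fin n → Bool) : (cubeGraph n).dist a b = hammingDist a b := by
  obtain ⟨p, hp⟩ := exists_walk_length_eq_hammingDist a b
  obtain ⟨q, hq⟩ := p.reachable.exists_walk_length_eq_dist
  exact le_antisymm (hp ▸ dist_le p) (hq ▸ hammingDist_le_length q)

end CubeGraph

lemma simplexGraph_adj {V : Type*} [DecidableEq V] (H : SimpleGraph V)
    (s t : {s : Finset V // H.IsClique (s : Set V)}) :
    (simplexGraph H).Adj s t ↔ #(s.1 ∆ t.1) = 1 := by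
  -- `simplexGraph` computes `∆` with the classical `DecidableEq` instance.
  unfold simplexGraph
  convert Iff.rfl

section SetFamily

variable {α : Type*} [DecidableEq α]

def majority (A B C : Finset α) : Finset α := A ∩ B ∪ A ∩ C ∪ B ∩ C

lemma inter_subset_and_subset_union_of_card_symmDiff_add {A B X : Finset α}
    (h : #(A ∆ X) + #(X ∆ B) = #(A ∆ B)) : A ∩ B ⊆ X ∧ X ⊆ A ∪ B := by
  have hdisj : Disjoint (A ∆ X) (X ∆ B) := by
    have := card_union_add_card_inter (A ∆ X) (X ∆ B)
    have := card_le_card (symmDiff_triangle A X B)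
    rw [disjoint_iff_inter_eq_empty, ← card_eq_zero]
    simp only [sup_eq_union] at this
    omega
  rw [Finset.disjoint_left] at hdisj
  constructor
  · intro x hx
    rw [mem_inter] at hx
    by_contra hX
    exact hdisj (mem_symmDiff.2 (.inl ⟨hx.1, hX⟩)) (mem_symmDiff.2 (.inr ⟨hx.2, hX⟩))
  · intro x hx
    by_contra hAB
    rw [mem_union, not_or] at hAB
    exact hdisj (mem_symmDiff.2 (.inr ⟨hx, hAB.1⟩)) (mem_symmDiff.2 (.inl ⟨hx, hAB.2⟩))

lemma eq_majority_of_card_symmDiff_add {A B C M : Finset α}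
    (hAB : #(A ∆ M) + #(M ∆ B) = #(A ∆ B)) (hAC : #(A ∆ M) + #(M ∆ C) = #(A ∆ C))
    (hBC : #(B ∆ M) + #(M ∆ C) = #(B ∆ C)) : M = majority A B C := by
  obtain ⟨hAB₁, hAB₂⟩ := inter_subset_and_subset_union_of_card_symmDiff_add hAB
  obtain ⟨hAC₁, hAC₂⟩ := inter_subset_and_subset_union_of_card_symmDiff_add hAC
  obtain ⟨hBC₁, hBC₂⟩ := inter_subset_and_subset_union_of_card_symmDiff_add hBC
  ext x
  simp only [majority, mem_union, mem_inter]
  constructor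
  · intro hx
    have := hAB₂ hx; have := hAC₂ hx; have := hBC₂ hx
    simp only [mem_union] at *
    tauto
  · rintro ((hx | hx) | hx)
    exacts [hAB₁ (mem_inter.2 hx), hAC₁ (mem_inter.2 hx), hBC₁ (mem_inter.2 hx)]

def IsMajorityClosed (𝓕 : Set (Finset α)) : Prop :=
  ∀ ⦃A⦄, A ∈ 𝓕 → ∀ ⦃B⦄, B ∈ 𝓕 → ∀ ⦃C⦄, C ∈ 𝓕 → majority A B C ∈ 𝓕

def familyGraph (𝓕 : Set (Finset α)) : SimpleGraph 𝓕 where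
  Adj A B := #(A.1 ∆ B.1) = 1
  symm := ⟨fun A B h => by rwa [symmDiff_comm]⟩
  loopless := ⟨fun A h => by simp at h⟩

def flagGraph (𝓕 : Set (Finset α)) : SimpleGraph {a : α // {a} ∈ 𝓕} where
  Adj a b := a ≠ b ∧ {a.1, b.1} ∈ 𝓕
  symm := ⟨fun a b h => ⟨h.1.symm, by rw [pair_comm]; exact h.2⟩⟩
  loopless := ⟨fun a h => h.1 rfl⟩

variable {𝓕 : Set (Finset α)}

lemma IsMajorityClosed.mem_of_pairwise (h𝓕 : IsMajorityClosed 𝓕) (hempty : ∅ ∈ 𝓕)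
    {S : Finset α} (hsingle : ∀ a ∈ S, {a} ∈ 𝓕)
    (hpair : (S : Set α).Pairwise fun a b => {a, b} ∈ 𝓕) : S ∈ 𝓕 := by
  induction S using Finset.strongInduction with
  | H S ih =>
  by_cases hS : S.Nontrivial
  · obtain ⟨a, ha, b, hb, hab⟩ := hS
    have hmaj : majority (S.erase a) (S.erase b) {a, b} = S := by
      ext x; by_cases x = a <;> by_cases x = b <;> simp_all [majority]
    have herase : ∀ c ∈ S, S.erase c ∈ 𝓕 := fun c hc =>
      ih _ (erase_ssubset hc) (fun x hx => hsingle x (mem_of_mem_erase hx))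
        (hpair.mono (coe_subset.2 (erase_subset c S)))
    rw [← hmaj]
    exact h𝓕 (herase a ha) (herase b hb) (hpair ha hb hab)
  · obtain rfl | ⟨a, ha⟩ := S.eq_empty_or_nonempty
    · exact hempty
    · rw [not_not.1 ((nontrivial_iff_ne_singleton ha).not.1 hS)]
      exact hsingle a ha

lemma IsMajorityClosed.map_subtype_mem_of_isClique (h𝓕 : IsMajorityClosed 𝓕) (hempty : ∅ ∈ 𝓕)
    {s : Finset {a : α // {a} ∈ 𝓕}} (hs : (flagGraph 𝓕).IsClique (s : Set {a : α // {a} ∈ 𝓕})) :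
    s.map (Function.Embedding.subtype _) ∈ 𝓕 := by
  refine h𝓕.mem_of_pairwise hempty (fun a ha => property_of_mem_map_subtype s ha) ?_
  simp only [Set.Pairwise, coe_map, Set.mem_image, mem_coe, Function.Embedding.subtype_apply]
  rintro _ ⟨a, ha, rfl⟩ _ ⟨b, hb, rfl⟩ hab
  exact (hs ha hb fun h => hab (congrArg Subtype.val h)).2

lemma IsLowerSet.exists_isClique_map_subtype_eq (h𝓕 : IsLowerSet 𝓕) {A : Finset α} (hA : A ∈ 𝓕) :
    ∃ s : Finset {a : α // {a} ∈ 𝓕}, (flagGraph 𝓕).IsClique (s : Set {a : α // {a} ∈ 𝓕}) ∧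
      s.map (Function.Embedding.subtype _) = A := by
  refine ⟨A.preimage Subtype.val Subtype.val_injective.injOn, ?_, ?_⟩
  · intro a ha b hb hab
    simp only [coe_preimage, Set.mem_preimage, mem_coe] at ha hb
    exact ⟨hab, h𝓕 (insert_subset ha (singleton_subset_iff.2 hb)) hA⟩
  · ext x
    simp only [mem_map, mem_preimage, Function.Embedding.subtype_apply, Subtype.exists,
      exists_and_right, exists_eq_right]
    exact ⟨fun ⟨_, hx⟩ => hx, fun hx => ⟨h𝓕 (singleton_subset_iff.2 hx) hA, hx⟩⟩

lemma card_symmDiff_map {β : Type*} [DecidableEq β] (e : α ↪ β) (s t : Finset α) :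
    #(s.map e ∆ t.map e) = #(s ∆ t) := by
  rw [map_eq_image, map_eq_image, ← image_symmDiff _ _ e.injective,
    card_image_of_injective _ e.injective]

noncomputable def simplexGraphIsoFamilyGraph (hlower : IsLowerSet 𝓕) (hmaj : IsMajorityClosed 𝓕)
    (hempty : ∅ ∈ 𝓕) : simplexGraph (flagGraph 𝓕) ≃g familyGraph 𝓕 where
  toEquiv := Equiv.ofBijective
    (fun s => ⟨s.1.map (Function.Embedding.subtype _), hmaj.map_subtype_mem_of_isClique hempty s.2⟩)
    ⟨fun s t h => Subtype.ext (map_injective _ (congrArg Subtype.val h)), fun A =>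
      let ⟨s, hs, hsA⟩ := hlower.exists_isClique_map_subtype_eq A.2
      ⟨⟨s, hs⟩, Subtype.ext hsA⟩⟩
  map_rel_iff' {s t} := by
    rw [simplexGraph_adj, ← card_symmDiff_map (Function.Embedding.subtype _)]
    rfl

end SetFamily

section MedianGraph

variable {V α : Type*} [DecidableEq α] {G : SimpleGraph V} {g : V → Finset α}

lemma IsMedianGraph.isMajorityClosed_range (hG : IsMedianGraph G)
    (hg : ∀ u v, G.dist u v = #(g u ∆ g v)) : IsMajorityClosed (Set.range g) := by
  rintro _ ⟨u, rfl⟩ _ ⟨v, rfl⟩ _ ⟨w, rfl⟩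
  obtain ⟨m, ⟨huv, huw, hvw⟩, -⟩ := hG.2 u v w
  simp only [hg] at huv huw hvw
  exact ⟨m, eq_majority_of_card_symmDiff_add huv huw hvw⟩

noncomputable def SimpleGraph.Connected.isoFamilyGraph (hG : G.Connected)
    (hg : ∀ u v, G.dist u v = #(g u ∆ g v)) : G ≃g familyGraph (Set.range g) where
  toEquiv := Equiv.ofInjective g fun u v huv => hG.dist_eq_zero_iff.1 (by simp [hg, huv])
  map_rel_iff' {u v} := by
    show #(g u ∆ g v) = 1 ↔ _
    rw [← hg, dist_eq_one_iff_adj]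

end MedianGraph

theorem stmt10_general {V : Type} (G : SimpleGraph V)
    (hG : IsMedianGraph G) (hd : IsDaisyCube G) :
    ∃ (W : Type) (H : SimpleGraph W), Nonempty (G ≃g simplexGraph H) := by
  obtain ⟨n, f, ⟨-, -, hf⟩, hdown⟩ := hd
  set g : V → Finset (Fin n) := fun u => trueSet (f u)
  have hg : ∀ u v, G.dist u v = #(g u ∆ g v) := fun u v => by
    rw [hf, cubeGraph_dist, card_symmDiff_trueSet]
  have hlower : IsLowerSet (Set.range g) := isLowerSet_range_trueSet hdown
  obtain ⟨v⟩ := hG.1.nonempty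
  have hempty : ∅ ∈ Set.range g := hlower (empty_subset (g v)) ⟨v, rfl⟩
  exact ⟨_, flagGraph (Set.range g), ⟨(hG.1.isoFamilyGraph hg).trans
    (simplexGraphIsoFamilyGraph hlower (hG.isMajorityClosed_range hg) hempty).symm⟩⟩

/-- A finite median graph that is a daisy cube is isomorphic to the simplex graph of
some graph. -/
theorem stmt10 {V : Type} [Fintype V] (G : SimpleGraph V)
    (hG : IsMedianGraph G) (hd : IsDaisyCube G) :
    ∃ (W : Type) (H : SimpleGraph W), Nonempty (G ≃g simplexGraph H) :=
  stmt10_general G hG hd
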